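/- Let a > 0 with e^{2a} > 32, and let f, g, h : [a,∞) × T → ℂ be smooth compactly supported functions on a half-cylinder over a flat torus T, satisfying ∫_T Δ_T f · f̄ ≥ ∫_T |f|², ∫_T Δ_T g · ḡ ≥ ∫_T |g|², and ∫_T Δ_T h · h̄ ≥ ∫_T |h|² (for each fixed u). Then ∫ (e^{2u}−16)(Δ_T f·f̄ + Δ_T g·ḡ) du dxdy + 4∫ Re(∂_x h·f̄ + ∂_y h·ḡ) dudxdy + ∫ |∇_T h|² dudxdy ≥ 0, using the pointwise inequalities (8|f|−|∇_T h|)² ≥ 0 and (8|g|−|∇_T h|)² ≥ 0. -/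

import Mathlib

/-!
On the support `e^{2u} - 16 ≥ 16`, so the first term is at least `16 ∫ (|∇_T f|² + |∇_T g|²)`,
and integrating the slicewise hypotheses in `u` bounds this below by `16 ∫ (|f|² + |g|²)`.
The squares `(8|f| - |∂ₓh|)²` and `(8|g| - |∂_y h|)²` bound the cross term below pointwise by
`-16 (|f|² + |g|²) - |∇_T h|² / 4`, which the other two terms absorb.

The integration in `u` is Tonelli's theorem for `volume.prod volume` with an arbitrary measure on
`T`; it is derived from the definition of `Measure.prod` as a bind instead of assuming `SFinite`.
-/

open MeasureTheory Filter ENNReal ComplexConjugate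

namespace MeasureTheory

variable {α β : Type*} [MeasurableSpace α] [MeasurableSpace β] {μ : Measure α} {ν : Measure β}

namespace Measure

/-- `μ.prod ν` is defined as `μ.bind (fun x => ν.map (Prod.mk x))`; a.e.-measurability of this
kernel replaces `SFinite ν` in Tonelli's theorem, and without it `μ.prod ν = 0`. -/
def HasAEMeasurableSlices (μ : Measure α) (ν : Measure β) : Prop :=
  AEMeasurable (fun x => ν.map (Prod.mk x)) μ

theorem prod_eq_zero_of_not_hasAEMeasurableSlices (hκ : ¬ μ.HasAEMeasurableSlices ν) :
    μ.prod ν = 0 := by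
  rw [prod_def, bind, map_of_not_aemeasurable hκ, join_zero]

namespace HasAEMeasurableSlices

theorem aemeasurable_lintegral_of_measurable (hκ : μ.HasAEMeasurableSlices ν)
    {f : α × β → ℝ≥0∞} (hf : Measurable f) :
    AEMeasurable (fun x => ∫⁻ y, f (x, y) ∂ν) μ :=
  ((measurable_lintegral hf).comp_aemeasurable hκ).congr
    (Eventually.of_forall fun _ => lintegral_map hf measurable_prodMk_left)

theorem lintegral_prod_of_measurable (hκ : μ.HasAEMeasurableSlices ν)
    {f : α × β → ℝ≥0∞} (hf : Measurable f) :
    ∫⁻ p, f p ∂μ.prod ν = ∫⁻ x, ∫⁻ y, f (x, y) ∂ν ∂μ := by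
  rw [prod_def, bind, lintegral_join hf.aemeasurable,
    lintegral_map' (measurable_lintegral hf).aemeasurable hκ]
  exact lintegral_congr fun _ => lintegral_map hf measurable_prodMk_left

theorem ae_ae_of_ae_prod (hκ : μ.HasAEMeasurableSlices ν) {P : α × β → Prop}
    (h : ∀ᵐ p ∂μ.prod ν, P p) : ∀ᵐ x ∂μ, ∀ᵐ y ∂ν, P (x, y) := by
  obtain ⟨t, hPt, ht, ht0⟩ := exists_measurable_superset_of_null (ae_iff.mp h)
  have hind : Measurable (t.indicator (1 : α × β → ℝ≥0∞)) := measurable_one.indicator ht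
  have hslices : ∫⁻ x, ∫⁻ y, t.indicator 1 (x, y) ∂ν ∂μ = 0 := by
    rw [← hκ.lintegral_prod_of_measurable hind, lintegral_indicator_one ht, ht0]
  filter_upwards [(lintegral_eq_zero_iff' (hκ.aemeasurable_lintegral_of_measurable hind)).mp
    hslices] with x hx
  filter_upwards [(lintegral_eq_zero_iff' (hind.comp measurable_prodMk_left).aemeasurable).mp
    hx] with y hy
  by_contra hP
  simp [Set.indicator_of_mem (hPt hP)] at hy

theorem aemeasurable_lintegral (hκ : μ.HasAEMeasurableSlices ν) {f : α × β → ℝ≥0∞}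
    (hf : AEMeasurable f (μ.prod ν)) : AEMeasurable (fun x => ∫⁻ y, f (x, y) ∂ν) μ := by
  refine (hκ.aemeasurable_lintegral_of_measurable hf.measurable_mk).congr ?_
  filter_upwards [hκ.ae_ae_of_ae_prod hf.ae_eq_mk] with x hx
  exact lintegral_congr_ae (hx.mono fun _ h => h.symm)

theorem lintegral_prod (hκ : μ.HasAEMeasurableSlices ν) {f : α × β → ℝ≥0∞}
    (hf : AEMeasurable f (μ.prod ν)) :
    ∫⁻ p, f p ∂μ.prod ν = ∫⁻ x, ∫⁻ y, f (x, y) ∂ν ∂μ := by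
  rw [lintegral_congr_ae hf.ae_eq_mk, hκ.lintegral_prod_of_measurable hf.measurable_mk]
  refine lintegral_congr_ae ?_
  filter_upwards [hκ.ae_ae_of_ae_prod hf.ae_eq_mk] with x hx
  exact lintegral_congr_ae (hx.mono fun _ h => h.symm)

theorem ae_integrable_prod_right (hκ : μ.HasAEMeasurableSlices ν) {E : Type*}
    [NormedAddCommGroup E] {f : α × β → E} (hf : Integrable f (μ.prod ν)) :
    ∀ᵐ x ∂μ, Integrable (fun y => f (x, y)) ν := by
  have hmeas : ∀ᵐ x ∂μ, AEStronglyMeasurable (fun y => f (x, y)) ν := by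
    filter_upwards [hκ.ae_ae_of_ae_prod hf.1.ae_eq_mk] with x hx
    exact (hf.1.stronglyMeasurable_mk.comp_measurable
      measurable_prodMk_left).aestronglyMeasurable.congr (hx.mono fun _ h => h.symm)
  have hnorm : AEMeasurable (fun p => ‖f p‖ₑ) (μ.prod ν) := hf.1.enorm
  have hfin : ∫⁻ x, ∫⁻ y, ‖f (x, y)‖ₑ ∂ν ∂μ ≠ ∞ := by
    rw [← hκ.lintegral_prod hnorm]
    exact hf.2.ne
  filter_upwards [hmeas, ae_lt_top' (hκ.aemeasurable_lintegral hnorm) hfin] with x hxm hxfin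
  exact ⟨hxm, hxfin⟩

theorem ofReal_integral_prod_of_nonneg (hκ : μ.HasAEMeasurableSlices ν) {φ : α × β → ℝ}
    (hφ : 0 ≤ φ) (hφi : Integrable φ (μ.prod ν)) :
    ENNReal.ofReal (∫ p, φ p ∂μ.prod ν) = ∫⁻ x, ENNReal.ofReal (∫ y, φ (x, y) ∂ν) ∂μ := by
  rw [ofReal_integral_eq_lintegral_ofReal hφi (Eventually.of_forall hφ),
    hκ.lintegral_prod hφi.1.aemeasurable.ennreal_ofReal]
  refine lintegral_congr_ae ?_
  filter_upwards [hκ.ae_integrable_prod_right hφi] with x hx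
  exact (ofReal_integral_eq_lintegral_ofReal hx (Eventually.of_forall fun y => hφ _)).symm

end HasAEMeasurableSlices

end Measure

theorem integral_prod_mono_of_slices {φ ψ : α × β → ℝ} (hφ : 0 ≤ φ) (hψ : 0 ≤ ψ)
    (hφi : Integrable φ (μ.prod ν)) (hψi : Integrable ψ (μ.prod ν))
    (hle : ∀ x, ∫ y, φ (x, y) ∂ν ≤ ∫ y, ψ (x, y) ∂ν) :
    ∫ p, φ p ∂μ.prod ν ≤ ∫ p, ψ p ∂μ.prod ν := by
  by_cases hκ : μ.HasAEMeasurableSlices ν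
  · rw [← ENNReal.ofReal_le_ofReal_iff (integral_nonneg hψ),
      hκ.ofReal_integral_prod_of_nonneg hφ hφi, hκ.ofReal_integral_prod_of_nonneg hψ hψi]
    exact lintegral_mono fun x => ENNReal.ofReal_le_ofReal (hle x)
  · simp [Measure.prod_eq_zero_of_not_hasAEMeasurableSlices hκ]

end MeasureTheory

theorem Complex.neg_le_four_mul_re_mul_conj (z w : ℂ) :
    -(16 * ‖w‖ ^ 2 + ‖z‖ ^ 2 / 4) ≤ 4 * (z * conj w).re := by
  have hre : -(‖z‖ * ‖w‖) ≤ (z * conj w).re := by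
    simpa [norm_mul] using neg_le_of_abs_le (abs_re_le_norm (z * conj w))
  nlinarith [sq_nonneg (8 * ‖w‖ - ‖z‖)]

theorem sixteen_le_exp_two_mul_sub_sixteen {a u : ℝ} (ha : 32 < Real.exp (2 * a)) (hu : a ≤ u) :
    16 ≤ Real.exp (2 * u) - 16 := by
  linarith [Real.exp_le_exp.mpr (by linarith : 2 * a ≤ 2 * u)]

theorem half_cylinder_cross_term_nonneg_general
    {T : Type*} [MeasureSpace T]
    (a : ℝ) (ha : 32 < Real.exp (2 * a))
    (F G Hfun Hx Hy : ℝ × T → ℂ) (DTf DTg DTh : ℝ × T → ℝ)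
    (μ : Measure (ℝ × T)) (hμ : μ = (volume : Measure ℝ).prod (volume : Measure T))
    -- compact support, contained in `u ≥ a`
    (hsupp : ∀ p : ℝ × T, p.1 < a →
      F p = 0 ∧ G p = 0 ∧ Hfun p = 0 ∧ Hx p = 0 ∧ Hy p = 0 ∧
      DTf p = 0 ∧ DTg p = 0 ∧ DTh p = 0)
    -- `|∇_T φ|² ≥ 0` pointwise
    (hDTf0 : ∀ p, 0 ≤ DTf p) (hDTg0 : ∀ p, 0 ≤ DTg p)
    -- `|∇_T h|² = |∂ₓ h|² + |∂_y h|²`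
    (hDTh : ∀ p, DTh p = ‖Hx p‖ ^ 2 + ‖Hy p‖ ^ 2)
    -- slicewise: `∫_T Δ_T f · conj f ≥ ∫_T |f|²`, and likewise for `g`, `h`
    (hf : ∀ u : ℝ, (∫ x : T, ‖F (u, x)‖ ^ 2) ≤ ∫ x : T, DTf (u, x))
    (hg : ∀ u : ℝ, (∫ x : T, ‖G (u, x)‖ ^ 2) ≤ ∫ x : T, DTg (u, x))
    -- integrability of all relevant quantities on the half-cylinder
    (hi1 : Integrable (fun p => (Real.exp (2 * p.1) - 16) * (DTf p + DTg p)) μ)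
    (hi2 : Integrable (fun p => ((Hx p) * (starRingEnd ℂ) (F p)
      + (Hy p) * (starRingEnd ℂ) (G p)).re) μ)
    (hi3 : Integrable DTh μ) (hi4 : Integrable DTf μ) (hi5 : Integrable DTg μ)
    (hi6 : Integrable (fun p => ‖F p‖ ^ 2) μ) (hi7 : Integrable (fun p => ‖G p‖ ^ 2) μ) :
    0 ≤ (∫ p, (Real.exp (2 * p.1) - 16) * (DTf p + DTg p) ∂μ)
      + 4 * (∫ p, ((Hx p) * (starRingEnd ℂ) (F p)
          + (Hy p) * (starRingEnd ℂ) (G p)).re ∂μ)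
      + ∫ p, (‖Hx p‖ ^ 2 + ‖Hy p‖ ^ 2) ∂μ := by
  have hgrad : Integrable (fun p => ‖Hx p‖ ^ 2 + ‖Hy p‖ ^ 2) μ :=
    hi3.congr (Eventually.of_forall hDTh)
  have hFf : ∫ p, ‖F p‖ ^ 2 ∂μ ≤ ∫ p, DTf p ∂μ := by
    subst hμ
    exact integral_prod_mono_of_slices (fun p => sq_nonneg ‖F p‖) hDTf0 hi6 hi4 hf
  have hGg : ∫ p, ‖G p‖ ^ 2 ∂μ ≤ ∫ p, DTg p ∂μ := by
    subst hμ
    exact integral_prod_mono_of_slices (fun p => sq_nonneg ‖G p‖) hDTg0 hi7 hi5 hg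
  have hweight : 16 * ((∫ p, DTf p ∂μ) + ∫ p, DTg p ∂μ)
      ≤ ∫ p, (Real.exp (2 * p.1) - 16) * (DTf p + DTg p) ∂μ := by
    rw [← integral_add hi4 hi5, ← integral_const_mul]
    refine integral_mono ((hi4.add hi5).const_mul 16) hi1 fun p => ?_
    rcases lt_or_ge p.1 a with hp | hp
    · obtain ⟨-, -, -, -, -, hf0, hg0, -⟩ := hsupp p hp
      simp [hf0, hg0]
    · exact mul_le_mul_of_nonneg_right (sixteen_le_exp_two_mul_sub_sixteen ha hp)
        (add_nonneg (hDTf0 p) (hDTg0 p))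
  have hFG : Integrable (fun p => 16 * (‖F p‖ ^ 2 + ‖G p‖ ^ 2)) μ := (hi6.add hi7).const_mul 16
  have hcross : ∫ p, -(16 * (‖F p‖ ^ 2 + ‖G p‖ ^ 2) + (‖Hx p‖ ^ 2 + ‖Hy p‖ ^ 2) / 4) ∂μ
      ≤ ∫ p, 4 * (Hx p * conj (F p) + Hy p * conj (G p)).re ∂μ := by
    refine integral_mono (hFG.add (hgrad.div_const 4)).neg (hi2.const_mul 4) fun p => ?_
    have hx := Complex.neg_le_four_mul_re_mul_conj (Hx p) (F p)
    have hy := Complex.neg_le_four_mul_re_mul_conj (Hy p) (G p)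
    simp only [Complex.add_re]
    linarith
  rw [integral_neg, integral_add hFG (hgrad.div_const 4), integral_const_mul,
    integral_add hi6 hi7, integral_div, integral_const_mul] at hcross
  have hgrad0 : 0 ≤ ∫ p, (‖Hx p‖ ^ 2 + ‖Hy p‖ ^ 2) ∂μ := integral_nonneg fun p => by positivity
  linarith

/-- On a half-cylinder `[a,∞) × T` over a flat torus `T` (with `e^{2a} > 32`),
for smooth compactly supported `f, g, h` whose tangential Laplacians satisfy
`∫_T Δ_T φ · conj φ ≥ ∫_T |φ|²` slicewise, one has
`∫ (e^{2u}−16)(Δ_T f·conj f + Δ_T g·conj g) + 4∫ Re(∂ₓh·conj f + ∂_yh·conj g)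
 + ∫ |∇_T h|² ≥ 0`.
Here `F, G, Hfun` play the role of `f, g, h`; `Hx, Hy` are `∂ₓh, ∂_yh`;
`DTf, DTg, DTh` are the pointwise quantities `|∇_T f|², |∇_T g|², |∇_T h|²`
(so that `∫_T Δ_T φ · conj φ = ∫_T |∇_T φ|²` by integration by parts). -/
theorem half_cylinder_cross_term_nonneg
    {T : Type*} [MeasureSpace T]
    (a : ℝ) (ha : 32 < Real.exp (2 * a))
    (F G Hfun Hx Hy : ℝ × T → ℂ) (DTf DTg DTh : ℝ × T → ℝ)
    (μ : Measure (ℝ × T)) (hμ : μ = (volume : Measure ℝ).prod (volume : Measure T))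
    -- compact support, contained in `u ≥ a`
    (hsupp : ∀ p : ℝ × T, p.1 < a →
      F p = 0 ∧ G p = 0 ∧ Hfun p = 0 ∧ Hx p = 0 ∧ Hy p = 0 ∧
      DTf p = 0 ∧ DTg p = 0 ∧ DTh p = 0)
    -- `|∇_T φ|² ≥ 0` pointwise
    (hDTf0 : ∀ p, 0 ≤ DTf p) (hDTg0 : ∀ p, 0 ≤ DTg p) (hDTh0 : ∀ p, 0 ≤ DTh p)
    -- `|∇_T h|² = |∂ₓ h|² + |∂_y h|²`
    (hDTh : ∀ p, DTh p = ‖Hx p‖ ^ 2 + ‖Hy p‖ ^ 2)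
    -- slicewise: `∫_T Δ_T f · conj f ≥ ∫_T |f|²`, and likewise for `g`, `h`
    (hf : ∀ u : ℝ, (∫ x : T, ‖F (u, x)‖ ^ 2) ≤ ∫ x : T, DTf (u, x))
    (hg : ∀ u : ℝ, (∫ x : T, ‖G (u, x)‖ ^ 2) ≤ ∫ x : T, DTg (u, x))
    (hh : ∀ u : ℝ, (∫ x : T, ‖Hfun (u, x)‖ ^ 2) ≤ ∫ x : T, DTh (u, x))
    -- integrability of all relevant quantities on the half-cylinder
    (hi1 : Integrable (fun p => (Real.exp (2 * p.1) - 16) * (DTf p + DTg p)) μ)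
    (hi2 : Integrable (fun p => ((Hx p) * (starRingEnd ℂ) (F p)
      + (Hy p) * (starRingEnd ℂ) (G p)).re) μ)
    (hi3 : Integrable DTh μ) (hi4 : Integrable DTf μ) (hi5 : Integrable DTg μ)
    (hi6 : Integrable (fun p => ‖F p‖ ^ 2) μ) (hi7 : Integrable (fun p => ‖G p‖ ^ 2) μ) :
    0 ≤ (∫ p, (Real.exp (2 * p.1) - 16) * (DTf p + DTg p) ∂μ)
      + 4 * (∫ p, ((Hx p) * (starRingEnd ℂ) (F p)
          + (Hy p) * (starRingEnd ℂ) (G p)).re ∂μ)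
      + ∫ p, (‖Hx p‖ ^ 2 + ‖Hy p‖ ^ 2) ∂μ :=
  half_cylinder_cross_term_nonneg_general a ha F G Hfun Hx Hy DTf DTg DTh μ hμ hsupp hDTf0 hDTg0
    hDTh hf hg hi1 hi2 hi3 hi4 hi5 hi6 hi7
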